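/- arXiv:2211.01720 — 2 statements merged into one kernel-verified Lean document; each statement's English description precedes it below -/
import Mathlib

section
/- For all μ > 0 and λ > 0, the re-parameterized inverse Gaussian density ψ̃(·; μ, λ) integrates to one over (0, ∞), and it attains its unique global maximum on (0, ∞) at the point x = μ; i.e., ∫₀^∞ ψ̃(x; μ, λ) dx = 1 and ψ̃(x; μ, λ) < ψ̃(μ; μ, λ) for every x > 0 with x ≠ μ. -/
open MeasureTheory Real Filter Topology Set

/-- The re-parameterized inverse Gaussian density with mode `μ` and variability `lam`. -/
noncomputable def rInvGaussPDF (μ lam x : ℝ) : ℝ :=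
  if 0 < x then
    Real.sqrt (μ * (3 * lam + μ) / (2 * Real.pi * lam * x ^ 3)) *
      Real.exp (-(x - Real.sqrt (μ * (3 * lam + μ))) ^ 2 / (2 * lam * x))
  else 0


lemma gauss_integrable : Integrable (fun u : ℝ => Real.exp (-u^2/2)) := by
  have h := integrable_exp_neg_mul_sq (b := (1/2:ℝ)) (by norm_num)
  convert h using 2 with u
  ring_nf

noncomputable def myPhi (t : ℝ) : ℝ := ∫ u in Set.Iic t, Real.exp (-u^2/2)

lemma myPhi_eq (t : ℝ) : myPhi t = myPhi 0 + ∫ u in (0:ℝ)..t, Real.exp (-u^2/2) := by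
  rw [← intervalIntegral.integral_Iic_sub_Iic gauss_integrable.integrableOn gauss_integrable.integrableOn]
  simp [myPhi]

lemma myPhi_hasDerivAt (t : ℝ) : HasDerivAt myPhi (Real.exp (-t^2/2)) t := by
  have h : HasDerivAt (fun u => ∫ x in (0:ℝ)..u, Real.exp (-x^2/2)) (Real.exp (-t^2/2)) t := by
    apply intervalIntegral.integral_hasDerivAt_right
      gauss_integrable.intervalIntegrable
      gauss_integrable.aestronglyMeasurable.stronglyMeasurableAtFilter
    exact (by continuity : Continuous (fun u : ℝ => Real.exp (-u^2/2))).continuousAt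
  have := h.const_add (myPhi 0)
  apply this.congr_of_eventuallyEq
  filter_upwards with x using (myPhi_eq x)

lemma integral_gauss_total : (∫ u : ℝ, Real.exp (-u^2/2)) = Real.sqrt (2*π) := by
  have h := integral_gaussian (1/2 : ℝ)
  rw [show (π / (1/2:ℝ)) = 2*π by ring] at h
  rw [← h]
  congr 1 with u
  ring_nf

lemma myPhi_tendsto_atTop : Tendsto myPhi atTop (𝓝 (Real.sqrt (2*π))) := by
  have h1 : Tendsto (fun t => ∫ u in (0:ℝ)..t, Real.exp (-u^2/2)) atTop
      (𝓝 (∫ u in Set.Ioi (0:ℝ), Real.exp (-u^2/2))) :=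
    intervalIntegral_tendsto_integral_Ioi 0 gauss_integrable.integrableOn tendsto_id
  have h2 : myPhi 0 + ∫ u in Set.Ioi (0:ℝ), Real.exp (-u^2/2) = Real.sqrt (2*π) := by
    rw [← integral_gauss_total, ← intervalIntegral.integral_Iic_add_Ioi (b := (0:ℝ))
      gauss_integrable.integrableOn gauss_integrable.integrableOn]
    rfl
  rw [← h2]
  exact Tendsto.congr (fun t => (myPhi_eq t).symm) (tendsto_const_nhds.add h1)

lemma myPhi_tendsto_atBot : Tendsto myPhi atBot (𝓝 0) := by
  have h1 : Tendsto (fun t => ∫ u in t..(0:ℝ), Real.exp (-u^2/2)) atBot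
      (𝓝 (myPhi 0)) :=
    intervalIntegral_tendsto_integral_Iic 0 gauss_integrable.integrableOn tendsto_id
  have : Tendsto (fun t => myPhi 0 - ∫ u in t..(0:ℝ), Real.exp (-u^2/2)) atBot
      (𝓝 (myPhi 0 - myPhi 0)) := tendsto_const_nhds.sub h1
  simp only [sub_self] at this
  apply this.congr
  intro t
  rw [myPhi_eq t, intervalIntegral.integral_symm]
  ring


lemma sqrt_tendsto_atTop : Tendsto Real.sqrt atTop atTop := by
  have h := tendsto_rpow_atTop (y := (1/2:ℝ)) (by norm_num)
  exact h.congr fun x => (Real.sqrt_eq_rpow x).symm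

lemma integral_lemma (μ lam : ℝ) (hμ : 0 < μ) (hlam : 0 < lam) :
    ∫ x in Set.Ioi (0 : ℝ), rInvGaussPDF μ lam x = 1 := by
  have hπ := Real.pi_pos
  set a : ℝ := μ * (3 * lam + μ) with ha
  have ha0 : 0 < a := by positivity
  set m : ℝ := Real.sqrt a with hmdef
  have hm0 : 0 < m := Real.sqrt_pos.2 ha0
  have hm2 : m ^ 2 = a := Real.sq_sqrt ha0.le
  set S : ℝ := Real.sqrt (2 * π) with hS
  have hS0 : 0 < S := Real.sqrt_pos.2 (by positivity)
  set C : ℝ := Real.exp (2 * m / lam) with hC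
  set g : ℝ → ℝ := fun x => (x - m) / Real.sqrt (lam * x) with hg
  set h : ℝ → ℝ := fun x => -(x + m) / Real.sqrt (lam * x) with hh
  set F : ℝ → ℝ := fun x => if 0 < x then (myPhi (g x) + C * myPhi (h x)) / S else 0 with hF
  have hsq : ∀ x : ℝ, 0 < x → Real.sqrt (lam * x) ^ 2 = lam * x := by
    intro x hx; exact Real.sq_sqrt (by positivity)
  have hs0 : ∀ x : ℝ, 0 < x → 0 < Real.sqrt (lam * x) := by
    intro x hx; exact Real.sqrt_pos.2 (by positivity)
  -- derivative of F on Ioi 0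
  have hderiv : ∀ x ∈ Set.Ioi (0:ℝ), HasDerivAt F (rInvGaussPDF μ lam x) x := by
    intro x hx
    rw [Set.mem_Ioi] at hx
    set s : ℝ := Real.sqrt (lam * x) with hs
    have hsp : 0 < s := hs0 x hx
    have hssq : s ^ 2 = lam * x := hsq x hx
    have hl : lam / (2 * s) = s / (2 * x) := by
      rw [div_eq_div_iff (by positivity) (by positivity)]
      linear_combination (-2 : ℝ) * hssq
    have hlin : HasDerivAt (fun y : ℝ => lam * y) lam x := by
      simpa using (hasDerivAt_id x).const_mul lam
    have hsd : HasDerivAt (fun y : ℝ => Real.sqrt (lam * y)) (lam / (2 * s)) x := by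
      have := (Real.hasDerivAt_sqrt (by positivity : lam * x ≠ 0)).comp x hlin
      refine this.congr_deriv ?_
      rw [← hs]; ring
    have hgd : HasDerivAt g ((x + m) / (2 * x * s)) x := by
      have hnum : HasDerivAt (fun y : ℝ => y - m) 1 x := (hasDerivAt_id x).sub_const m
      have h2 := hnum.div hsd hsp.ne'
      refine h2.congr_deriv ?_
      rw [← hs, hl]
      field_simp
      ring
    have hhd : HasDerivAt h ((m - x) / (2 * x * s)) x := by
      have hnum : HasDerivAt (fun y : ℝ => -(y + m)) (-1) x := by
        exact ((hasDerivAt_id x).add_const m).neg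
      have h2 := hnum.div hsd hsp.ne'
      refine h2.congr_deriv ?_
      rw [← hs, hl]
      field_simp
      ring
    have hPg : HasDerivAt (fun y => myPhi (g y))
        (Real.exp (-(g x)^2/2) * ((x + m) / (2 * x * s))) x :=
      (myPhi_hasDerivAt (g x)).comp x hgd
    have hPh : HasDerivAt (fun y => myPhi (h y))
        (Real.exp (-(h x)^2/2) * ((m - x) / (2 * x * s))) x :=
      (myPhi_hasDerivAt (h x)).comp x hhd
    have hcomb : HasDerivAt (fun y => (myPhi (g y) + C * myPhi (h y)) / S)
        ((Real.exp (-(g x)^2/2) * ((x + m) / (2 * x * s))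
          + C * (Real.exp (-(h x)^2/2) * ((m - x) / (2 * x * s)))) / S) x :=
      (hPg.add (hPh.const_mul C)).div_const S
    have hgx2 : (g x)^2 = (x - m)^2 / (lam * x) := by
      rw [hg]
      simp only [div_pow]
      rw [← hs, hssq]
    have hhx2 : (h x)^2 = (x + m)^2 / (lam * x) := by
      simp only [hh]
      rw [neg_div, neg_sq, div_pow, ← hs, hssq]
    have hCE : C * Real.exp (-(h x)^2/2) = Real.exp (-(g x)^2/2) := by
      rw [hC, ← Real.exp_add, hgx2, hhx2]
      congr 1
      field_simp
      ring
    have hcoef : Real.sqrt (a / (2 * Real.pi * lam * x ^ 3)) = m / (x * s * S) := by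
      rw [Real.sqrt_div ha0.le, ← hmdef]
      congr 1
      rw [show 2 * Real.pi * lam * x ^ 3 = (lam * x) * (x^2 * (2 * π)) by ring,
        Real.sqrt_mul (show (0:ℝ) ≤ lam * x by positivity) (x^2 * (2 * π)),
        Real.sqrt_mul (sq_nonneg x) (2 * π),
        Real.sqrt_sq hx.le, ← hs, ← hS]
      ring
    have hval : (Real.exp (-(g x)^2/2) * ((x + m) / (2 * x * s))
          + C * (Real.exp (-(h x)^2/2) * ((m - x) / (2 * x * s)))) / S
        = rInvGaussPDF μ lam x := by
      rw [show C * (Real.exp (-(h x)^2/2) * ((m - x) / (2 * x * s)))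
          = (C * Real.exp (-(h x)^2/2)) * ((m - x) / (2 * x * s)) by ring, hCE]
      rw [rInvGaussPDF, if_pos hx, ← ha, hcoef, hgx2]
      rw [show -((x - m)^2 / (lam * x))/2 = -(x - m)^2 / (2 * lam * x) by ring]
      field_simp
      ring
    rw [← hval]
    apply hcomb.congr_of_eventuallyEq
    filter_upwards [isOpen_Ioi.mem_nhds (Set.mem_Ioi.2 hx)] with y hy
    rw [hF]
    simp only [if_pos (Set.mem_Ioi.1 hy)]
  -- nonnegativity
  have hnonneg : ∀ x ∈ Set.Ioi (0:ℝ), 0 ≤ rInvGaussPDF μ lam x := by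
    intro x _
    rw [rInvGaussPDF]
    split
    · positivity
    · exact le_rfl
  -- continuity at 0 from the right
  have hsub : Tendsto (fun y => Real.sqrt (lam * y)) (𝓝[>] (0:ℝ)) (𝓝[>] (0:ℝ)) := by
    rw [tendsto_nhdsWithin_iff]
    constructor
    · have : Tendsto (fun y : ℝ => Real.sqrt (lam * y)) (𝓝 0) (𝓝 (Real.sqrt (lam * 0))) :=
        (Real.continuous_sqrt.comp (continuous_const.mul continuous_id)).tendsto 0
      simpa using this.mono_left nhdsWithin_le_nhds
    · filter_upwards [self_mem_nhdsWithin] with y hy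
      exact Set.mem_Ioi.2 (hs0 y hy)
  have hinv : Tendsto (fun y => (Real.sqrt (lam * y))⁻¹) (𝓝[>] (0:ℝ)) atTop :=
    tendsto_inv_nhdsGT_zero.comp hsub
  have hgbot : Tendsto g (𝓝[>] (0:ℝ)) atBot := by
    have hnum : Tendsto (fun y : ℝ => y - m) (𝓝[>] (0:ℝ)) (𝓝 (-m)) := by
      have : Tendsto (fun y : ℝ => y - m) (𝓝 (0:ℝ)) (𝓝 (0 - m)) :=
        (continuous_id.sub continuous_const).tendsto 0
      simpa using this.mono_left nhdsWithin_le_nhds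
    have := hnum.neg_mul_atTop (by linarith : -m < 0) hinv
    apply this.congr
    intro y
    simp only [hg]
    rw [div_eq_mul_inv]
  have hhbot : Tendsto h (𝓝[>] (0:ℝ)) atBot := by
    have hnum : Tendsto (fun y : ℝ => -(y + m)) (𝓝[>] (0:ℝ)) (𝓝 (-m)) := by
      have : Tendsto (fun y : ℝ => -(y + m)) (𝓝 (0:ℝ)) (𝓝 (-(0 + m))) :=
        ((continuous_id.add continuous_const).neg).tendsto 0
      simpa using this.mono_left nhdsWithin_le_nhds
    have := hnum.neg_mul_atTop (by linarith : -m < 0) hinv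
    apply this.congr
    intro y
    simp only [hh]
    rw [div_eq_mul_inv]
  have hcontF : ContinuousWithinAt F (Set.Ici (0:ℝ)) 0 := by
    apply continuousWithinAt_Ioi_iff_Ici.mp
    have hF0 : F 0 = 0 := by rw [hF]; simp
    rw [ContinuousWithinAt, hF0]
    have hlim : Tendsto (fun x => (myPhi (g x) + C * myPhi (h x)) / S) (𝓝[>] (0:ℝ))
        (𝓝 ((0 + C * 0) / S)) :=
      ((myPhi_tendsto_atBot.comp hgbot).add ((myPhi_tendsto_atBot.comp hhbot).const_mul C)).div_const S
    have : ((0:ℝ) + C * 0) / S = 0 := by ring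
    rw [this] at hlim
    apply hlim.congr'
    filter_upwards [self_mem_nhdsWithin] with y hy
    rw [hF]
    simp only [if_pos (Set.mem_Ioi.1 hy)]
  -- limit 1 at infinity
  have hgtop : Tendsto g atTop atTop := by
    have hslam : (0:ℝ) < Real.sqrt lam := Real.sqrt_pos.2 hlam
    have h1 : Tendsto (fun y : ℝ => Real.sqrt y / Real.sqrt lam) atTop atTop :=
      sqrt_tendsto_atTop.atTop_div_const hslam
    have h2 : Tendsto (fun y : ℝ => -(m * (Real.sqrt lam * Real.sqrt y)⁻¹)) atTop (𝓝 (-(m * 0))) := by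
      exact (((sqrt_tendsto_atTop.const_mul_atTop hslam).inv_tendsto_atTop).const_mul m).neg
    rw [mul_zero, neg_zero] at h2
    have h3 := h1.atTop_add h2
    apply h3.congr'
    filter_upwards [eventually_gt_atTop (0:ℝ)] with y hy
    have hy2 : Real.sqrt y * Real.sqrt y = y := Real.mul_self_sqrt hy.le
    have hys : (0:ℝ) < Real.sqrt y := Real.sqrt_pos.2 hy
    simp only [hg]
    rw [Real.sqrt_mul hlam.le]
    field_simp
    linear_combination hy2
  have hhbot' : Tendsto h atTop atBot := by
    have hng : Tendsto (fun y => -(g y)) atTop atBot := tendsto_neg_atTop_atBot.comp hgtop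
    apply tendsto_atBot_mono' atTop _ hng
    filter_upwards [eventually_gt_atTop (0:ℝ)] with y hy
    simp only [hh, hg]
    have hsy : (0:ℝ) < Real.sqrt (lam * y) := hs0 y hy
    rw [neg_div, neg_le_neg_iff]
    exact (div_le_div_iff_of_pos_right hsy).mpr (by linarith [hm0])
  have htop : Tendsto F atTop (𝓝 1) := by
    have hlim : Tendsto (fun x => (myPhi (g x) + C * myPhi (h x)) / S) atTop
        (𝓝 ((S + C * 0) / S)) :=
      ((myPhi_tendsto_atTop.comp hgtop).add ((myPhi_tendsto_atBot.comp hhbot').const_mul C)).div_const S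
    have : (S + C * 0) / S = 1 := by field_simp; ring
    rw [this] at hlim
    apply hlim.congr'
    filter_upwards [eventually_gt_atTop (0:ℝ)] with y hy
    rw [hF]
    simp only [if_pos hy]
  have hint := integral_Ioi_of_hasDerivAt_of_nonneg hcontF hderiv hnonneg htop
  rw [hint, hF]
  simp


lemma sqrt_cube_eq (x : ℝ) (hx : 0 < x) :
    Real.sqrt (x^3) = Real.exp ((3/2) * Real.log x) := by
  rw [show Real.sqrt (x^3) = (x^3) ^ ((1:ℝ)/2) from Real.sqrt_eq_rpow _,
    Real.rpow_def_of_pos (by positivity), Real.log_pow]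
  norm_num
  ring_nf

lemma pdf_eq (μ lam x : ℝ) (hμ : 0 < μ) (hlam : 0 < lam) (hx : 0 < x) :
    rInvGaussPDF μ lam x = Real.sqrt (μ * (3 * lam + μ) / (2 * π * lam)) *
      Real.exp (-(3/2) * Real.log x
        - (x - Real.sqrt (μ * (3 * lam + μ)))^2 / (2 * lam * x)) := by
  rw [rInvGaussPDF, if_pos hx]
  have h1 : μ * (3 * lam + μ) / (2 * Real.pi * lam * x ^ 3)
      = (μ * (3 * lam + μ) / (2 * π * lam)) * (x^3)⁻¹ := by
    field_simp
  rw [h1, Real.sqrt_mul (by positivity), Real.sqrt_inv, sqrt_cube_eq x hx,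
    ← Real.exp_neg, mul_assoc, ← Real.exp_add]
  congr 1
  ring

lemma mode_lemma (μ lam : ℝ) (hμ : 0 < μ) (hlam : 0 < lam) :
    ∀ x : ℝ, 0 < x → x ≠ μ → rInvGaussPDF μ lam x < rInvGaussPDF μ lam μ := by
  set m : ℝ := Real.sqrt (μ * (3 * lam + μ)) with hm
  have hm2 : m ^ 2 = μ * (3 * lam + μ) := Real.sq_sqrt (by positivity)
  set G : ℝ → ℝ := fun x => -(3/2) * Real.log x - (x - m)^2 / (2 * lam * x) with hG
  set G' : ℝ → ℝ := fun x => (μ - x) * (x + μ + 3 * lam) / (2 * lam * x^2) with hG'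
  have hderiv : ∀ x : ℝ, 0 < x → HasDerivAt G (G' x) x := by
    intro x hx
    have h1 : HasDerivAt (fun y : ℝ => Real.log y) x⁻¹ x := Real.hasDerivAt_log hx.ne'
    have h2 : HasDerivAt (fun y : ℝ => (y - m)^2) (2 * (x - m)) x := by
      have := ((hasDerivAt_id x).sub_const m).pow 2
      refine this.congr_deriv ?_
      simp
    have h3 : HasDerivAt (fun y : ℝ => 2 * lam * y) (2 * lam) x := by
      simpa using (hasDerivAt_id x).const_mul (2 * lam)
    have h4 := h2.div h3 (by positivity)
    have h5 := (h1.const_mul (-(3/2) : ℝ)).sub h4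
    refine h5.congr_deriv ?_
    have h6 : (2 * (x - m) * (2 * lam * x) - (x - m) ^ 2 * (2 * lam))
        = 2 * lam * (x^2 - μ * (3 * lam + μ)) := by
      linear_combination (-2 * lam) * hm2
    rw [hG', h6]
    have hx' : x ≠ 0 := hx.ne'
    field_simp
    ring
  have hcont : ∀ x : ℝ, 0 < x → ContinuousAt G x := fun x hx => (hderiv x hx).continuousAt
  have hmono : StrictMonoOn G (Set.Ioc 0 μ) := by
    apply strictMonoOn_of_deriv_pos (convex_Ioc 0 μ)
    · intro x hx; exact (hcont x hx.1).continuousWithinAt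
    · intro x hx
      rw [interior_Ioc] at hx
      rw [(hderiv x hx.1).deriv]
      have : 0 < μ - x := by linarith [hx.2]
      have h0 : 0 < x := hx.1
      positivity
  have hanti : StrictAntiOn G (Set.Ici μ) := by
    apply strictAntiOn_of_deriv_neg (convex_Ici μ)
    · intro x hx; exact (hcont x (lt_of_lt_of_le hμ hx)).continuousWithinAt
    · intro x hx
      rw [interior_Ici] at hx
      rw [(hderiv x (hμ.trans hx)).deriv]
      have h1 : μ - x < 0 := by linarith [hx.out]
      have h0 : 0 < x := hμ.trans hx
      apply div_neg_of_neg_of_pos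
      · exact mul_neg_of_neg_of_pos h1 (by linarith)
      · positivity
  intro x hx hxμ
  have key : G x < G μ := by
    rcases lt_or_gt_of_ne hxμ with h | h
    · exact hmono ⟨hx, h.le⟩ ⟨hμ, le_refl μ⟩ h
    · exact hanti (le_refl μ : μ ∈ Set.Ici μ) (h.le : x ∈ Set.Ici μ) h
  rw [pdf_eq μ lam x hμ hlam hx, pdf_eq μ lam μ hμ hlam hμ]
  have hK : 0 < Real.sqrt (μ * (3 * lam + μ) / (2 * π * lam)) := by
    apply Real.sqrt_pos.2
    have := Real.pi_pos
    positivity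
  exact mul_lt_mul_of_pos_left (Real.exp_lt_exp.2 key) hK

theorem rInvGaussPDF_integral_eq_one_and_mode (μ lam : ℝ) (hμ : 0 < μ) (hlam : 0 < lam) :
    (∫ x in Set.Ioi (0 : ℝ), rInvGaussPDF μ lam x = 1) ∧
    (∀ x : ℝ, 0 < x → x ≠ μ → rInvGaussPDF μ lam x < rInvGaussPDF μ lam μ) :=
  ⟨integral_lemma μ lam hμ hlam, mode_lemma μ lam hμ hlam⟩
end

section
/- Let i be a positive integer. For j = 1, …, i let t_j > 0, c_j^min ≤ c_j^max and m_j ∈ [c_j^min, c_j^max] with m_j ≥ 0, and set u = Σ_{j=1}^i m_j/t_j and v^max = Σ_{j=1}^i (c_j^max − c_j^min)²/t_j; assume u < 1 and v^max > 0. Let t_i satisfy t_j ≤ t_i for all j ≤ i and t_i > (Σ_{j=1}^i m_j)/(1−u). Set n_j = ⌈t_i/t_j⌉, and for each j = 1, …, i and k = 1, …, n_j let C_{j,k} be a real random variable, the whole family independent, with c_j^min ≤ C_{j,k} ≤ c_j^max almost surely and E[C_{j,k}] = m_j. Let W = Σ_{j=1}^i Σ_{k=1}^{n_j} C_{j,k}.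 Then P(W > t_i) ≤ exp(−(t_i(1−u) − Σ_{j=1}^i m_j)² / (t_i · v^max)). -/
open MeasureTheory ProbabilityTheory Real


lemma hoeff_scalar (p q t : ℝ) (hp : 0 ≤ p) (hq : 0 ≤ q) (hpq : p + q = 1) :
    p * exp (-q * t) + q * exp (p * t) ≤ exp (t ^ 2 / 8) := by
  have hD : ∀ s : ℝ, 0 < p + q * exp s := by
    intro s
    rcases hq.eq_or_lt with h | h
    · have : p = 1 := by linarith
      simp [← h, this]
    · exact add_pos_of_nonneg_of_pos hp (mul_pos h (exp_pos s))
  -- f := fun s => q*s + s^2/8 - log (p + q * exp s), f2 its derivative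
  set f : ℝ → ℝ := fun s => q * s + s ^ 2 / 8 - log (p + q * exp s) with hf
  set f2 : ℝ → ℝ := fun s => q + s / 4 - q * exp s / (p + q * exp s) with hf2
  have hDf : ∀ s, HasDerivAt (fun s => p + q * exp s) (q * exp s) s := by
    intro s
    simpa using ((Real.hasDerivAt_exp s).const_mul q).const_add p
  have hd1 : ∀ s, HasDerivAt f (f2 s) s := by
    intro s
    have h1 : HasDerivAt (fun s => log (p + q * exp s)) (q * exp s / (p + q * exp s)) s :=
      (hDf s).log (hD s).ne'
    have h2 : HasDerivAt (fun s : ℝ => q * s + s ^ 2 / 8) (q + s / 4) s := by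
      have := ((hasDerivAt_pow 2 s).div_const 8).const_add (q * s)
      have h3 : HasDerivAt (fun s : ℝ => q * s) q s := by
        simpa using (hasDerivAt_id s).const_mul q
      have := h3.add ((hasDerivAt_pow 2 s).div_const 8)
      exact this.congr_deriv (by norm_num; ring)
    exact h2.sub h1
  have hd2 : ∀ s, HasDerivAt f2 (1 / 4 - p * (q * exp s) / (p + q * exp s) ^ 2) s := by
    intro s
    have h2 : HasDerivAt (fun s : ℝ => q + s / 4) (1 / 4) s := by
      simpa using ((hasDerivAt_id s).div_const 4).const_add q
    have h3 : HasDerivAt (fun s => q * exp s / (p + q * exp s))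
        ((q * exp s * (p + q * exp s) - q * exp s * (q * exp s)) / (p + q * exp s) ^ 2) s :=
      ((Real.hasDerivAt_exp s).const_mul q).div (hDf s) (hD s).ne'
    have := h2.sub h3
    exact this.congr_deriv (by ring)
  have hd2nonneg : ∀ s, 0 ≤ 1 / 4 - p * (q * exp s) / (p + q * exp s) ^ 2 := by
    intro s
    rw [sub_nonneg, div_le_iff₀ (pow_pos (hD s) 2)]
    nlinarith [sq_nonneg (p - q * exp s), exp_pos s]
  have hf2mono : Monotone f2 :=
    monotone_of_deriv_nonneg (fun s => (hd2 s).differentiableAt)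
      (fun s => by rw [(hd2 s).deriv]; exact hd2nonneg s)
  have hf20 : f2 0 = 0 := by
    simp [hf2, exp_zero, mul_one]
    field_simp [hpq]
    rw [hpq]; ring
  have hf0 : f 0 = 0 := by
    simp [hf, exp_zero, mul_one, hpq]
  have hfnonneg : ∀ s, 0 ≤ f s := by
    intro s
    rcases le_total 0 s with h | h
    · have hmono : MonotoneOn f (Set.Ici 0) := by
        apply monotoneOn_of_deriv_nonneg (convex_Ici 0)
          (fun x _ => (hd1 x).differentiableAt.continuousAt.continuousWithinAt)
          (fun x _ => (hd1 x).differentiableAt.differentiableWithinAt)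
        intro x hx
        rw [(hd1 x).deriv]
        have : (0:ℝ) ≤ x := le_of_lt (by simpa using hx)
        calc (0:ℝ) = f2 0 := hf20.symm
          _ ≤ f2 x := hf2mono this
      have := hmono Set.self_mem_Ici (Set.mem_Ici.mpr h) h
      linarith [hf0 ▸ this]
    · have hanti : AntitoneOn f (Set.Iic 0) := by
        apply antitoneOn_of_deriv_nonpos (convex_Iic 0)
          (fun x _ => (hd1 x).differentiableAt.continuousAt.continuousWithinAt)
          (fun x _ => (hd1 x).differentiableAt.differentiableWithinAt)
        intro x hx
        rw [(hd1 x).deriv]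
        have hx0 : x ≤ (0:ℝ) := le_of_lt (by simpa using hx)
        calc f2 x ≤ f2 0 := hf2mono hx0
          _ = 0 := hf20
      have := hanti (Set.mem_Iic.mpr h) Set.self_mem_Iic h
      linarith [hf0 ▸ this]
  -- from f t ≥ 0 deduce the bound
  have key : p + q * exp t ≤ exp (q * t + t ^ 2 / 8) := by
    have h := hfnonneg t
    have hlog : log (p + q * exp t) ≤ q * t + t ^ 2 / 8 := by
      simp only [hf] at h; linarith
    calc p + q * exp t = exp (log (p + q * exp t)) := (exp_log (hD t)).symm
      _ ≤ exp (q * t + t ^ 2 / 8) := exp_le_exp.mpr hlog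
  have hrw : p * exp (-q * t) + q * exp (p * t) = exp (-q * t) * (p + q * exp t) := by
    rw [show p * t = t + -q * t by linear_combination t * hpq, exp_add]
    ring
  rw [hrw]
  calc exp (-q * t) * (p + q * exp t) ≤ exp (-q * t) * exp (q * t + t ^ 2 / 8) :=
        mul_le_mul_of_nonneg_left key (exp_pos _).le
    _ = exp (t ^ 2 / 8) := by rw [← exp_add]; ring_nf


lemma hoeff_mgf {Ω : Type*} [MeasurableSpace Ω] (μ : Measure Ω) [IsProbabilityMeasure μ]
    (X : Ω → ℝ) (hX : Measurable X) (a b l : ℝ) (hab : a ≤ b)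
    (hb : ∀ᵐ ω ∂μ, a ≤ X ω ∧ X ω ≤ b) :
    mgf X μ l ≤ exp (l * (∫ ω, X ω ∂μ) + l ^ 2 * (b - a) ^ 2 / 8) := by
  have hXint : Integrable X μ := by
    refine Integrable.mono' (integrable_const (|a| ⊔ |b|)) hX.aestronglyMeasurable ?_
    filter_upwards [hb] with ω h
    rw [Real.norm_eq_abs]
    exact abs_le.mpr ⟨le_trans (neg_le_neg (le_max_left _ _)) (le_trans (neg_abs_le a) h.1),
      le_trans h.2 (le_trans (le_abs_self b) (le_max_right _ _))⟩
  set m := ∫ ω, X ω ∂μ with hm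
  have hma : a ≤ m := by
    have := integral_mono_ae (integrable_const a) hXint (by filter_upwards [hb] with ω h using h.1)
    simpa using this
  have hmb : m ≤ b := by
    have := integral_mono_ae hXint (integrable_const b) (by filter_upwards [hb] with ω h using h.2)
    simpa using this
  rcases hab.eq_or_lt with hab' | hab'
  · subst hab'
    have hmeq : m = a := le_antisymm hmb hma
    have : mgf X μ l = exp (l * a) := by
      rw [mgf]
      rw [integral_congr_ae (g := fun _ => exp (l * a))
        (by filter_upwards [hb] with ω h using by rw [le_antisymm h.2 h.1])]
      simp
    rw [this, hmeq]
    apply exp_le_exp.mpr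
    nlinarith [sq_nonneg l]
  · have hba : (0:ℝ) < b - a := sub_pos.mpr hab'
    set p := (b - m) / (b - a) with hp'
    set q := (m - a) / (b - a) with hq'
    have hp : 0 ≤ p := div_nonneg (by linarith) hba.le
    have hq : 0 ≤ q := div_nonneg (by linarith) hba.le
    have hpq : p + q = 1 := by rw [hp', hq', ← add_div, show b - m + (m - a) = b - a by ring, div_self hba.ne']
    -- pointwise convexity bound
    have hptw : ∀ᵐ ω ∂μ, exp (l * X ω) ≤
        exp (l * a) / (b - a) * (b - X ω) + exp (l * b) / (b - a) * (X ω - a) := by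
      filter_upwards [hb] with ω h
      have hs : (0:ℝ) ≤ (b - X ω) / (b - a) := div_nonneg (by linarith [h.2]) hba.le
      have ht : (0:ℝ) ≤ (X ω - a) / (b - a) := div_nonneg (by linarith [h.1]) hba.le
      have hst : (b - X ω) / (b - a) + (X ω - a) / (b - a) = 1 := by field_simp; ring
      have hconv := convexOn_exp.2 (Set.mem_univ (l * a)) (Set.mem_univ (l * b)) hs ht hst
      have heq : ((b - X ω) / (b - a)) • (l * a) + ((X ω - a) / (b - a)) • (l * b)
          = l * X ω := by
        simp only [smul_eq_mul]
        field_simp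
        ring
      rw [heq] at hconv
      calc exp (l * X ω) ≤ (b - X ω) / (b - a) * exp (l * a)
            + (X ω - a) / (b - a) * exp (l * b) := hconv
        _ = exp (l * a) / (b - a) * (b - X ω) + exp (l * b) / (b - a) * (X ω - a) := by ring
    have hLint : Integrable (fun ω => exp (l * X ω)) μ := by
      refine Integrable.mono' (integrable_const (exp (|l| * (|a| ⊔ |b|))))
        ((hX.const_mul l).exp.aestronglyMeasurable) ?_
      filter_upwards [hb] with ω h
      rw [Real.norm_eq_abs, abs_of_pos (exp_pos _)]
      apply exp_le_exp.mpr
      calc l * X ω ≤ |l * X ω| := le_abs_self _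
        _ = |l| * |X ω| := abs_mul _ _
        _ ≤ |l| * (|a| ⊔ |b|) := by
            apply mul_le_mul_of_nonneg_left _ (abs_nonneg l)
            exact abs_le.mpr ⟨le_trans (neg_le_neg (le_max_left _ _))
              (le_trans (neg_abs_le a) h.1),
              le_trans h.2 (le_trans (le_abs_self b) (le_max_right _ _))⟩
    have e1 : Integrable (fun ω => exp (l * a) / (b - a) * (b - X ω)) μ := by
      exact ((integrable_const b).sub hXint).const_mul _
    have e2 : Integrable (fun ω => exp (l * b) / (b - a) * (X ω - a)) μ := by
      exact (hXint.sub (integrable_const a)).const_mul _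
    have hRint : Integrable
        (fun ω => exp (l * a) / (b - a) * (b - X ω) + exp (l * b) / (b - a) * (X ω - a)) μ :=
      e1.add e2
    have i1 : ∫ ω, (b - X ω) ∂μ = b - m := by
      rw [integral_sub (integrable_const b) hXint, integral_const]
      simp [hm]
    have i2 : ∫ ω, (X ω - a) ∂μ = m - a := by
      rw [integral_sub hXint (integrable_const a), integral_const]
      simp [hm]
    have step1 : mgf X μ l ≤ p * exp (l * a) + q * exp (l * b) := by
      calc mgf X μ l ≤ ∫ ω, (exp (l * a) / (b - a) * (b - X ω)
              + exp (l * b) / (b - a) * (X ω - a)) ∂μ := integral_mono_ae hLint hRint hptw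
        _ = exp (l * a) / (b - a) * (b - m) + exp (l * b) / (b - a) * (m - a) := by
            rw [integral_add e1 e2, integral_const_mul, integral_const_mul, i1, i2]
        _ = p * exp (l * a) + q * exp (l * b) := by rw [hp', hq']; ring
    have hqb : q * (b - a) = m - a := div_mul_cancel₀ _ hba.ne'
    have hpb : p * (b - a) = b - m := div_mul_cancel₀ _ hba.ne'
    set t := l * (b - a) with ht'
    have h1 : l * a = l * m + -q * t := by
      rw [ht']
      linear_combination l * hqb
    have h2 : l * b = l * m + p * t := by
      rw [ht']
      linear_combination (-l) * hpb
    calc mgf X μ l ≤ p * exp (l * a) + q * exp (l * b) := step1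
      _ = exp (l * m) * (p * exp (-q * t) + q * exp (p * t)) := by
          rw [h1, h2, exp_add, exp_add]; ring
      _ ≤ exp (l * m) * exp (t ^ 2 / 8) :=
          mul_le_mul_of_nonneg_left (hoeff_scalar p q t hp hq hpq) (exp_pos _).le
      _ = exp (l * m + l ^ 2 * (b - a) ^ 2 / 8) := by
          rw [← exp_add, ht']; ring_nf

lemma int_exp_bdd {Ω : Type*} [MeasurableSpace Ω] (μ : Measure Ω) [IsProbabilityMeasure μ]
    (X : Ω → ℝ) (hX : Measurable X) (a b l : ℝ)
    (hb : ∀ᵐ ω ∂μ, a ≤ X ω ∧ X ω ≤ b) :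
    Integrable (fun ω => exp (l * X ω)) μ := by
  refine Integrable.mono' (integrable_const (exp (|l| * (|a| ⊔ |b|))))
    ((hX.const_mul l).exp.aestronglyMeasurable) ?_
  filter_upwards [hb] with ω h
  rw [Real.norm_eq_abs, abs_of_pos (exp_pos _)]
  apply exp_le_exp.mpr
  calc l * X ω ≤ |l * X ω| := le_abs_self _
    _ = |l| * |X ω| := abs_mul _ _
    _ ≤ |l| * (|a| ⊔ |b|) := by
        apply mul_le_mul_of_nonneg_left _ (abs_nonneg l)
        exact abs_le.mpr ⟨le_trans (neg_le_neg (le_max_left _ _))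
          (le_trans (neg_abs_le a) h.1),
          le_trans h.2 (le_trans (le_abs_self b) (le_max_right _ _))⟩

theorem hoeffding_dmp_bound (i : ℕ) (hi : 0 < i)
    (t_ cmin cmax m : Fin i → ℝ) (ht_ : ∀ j, 0 < t_ j)
    (hc : ∀ j, cmin j ≤ cmax j)
    (hmmem : ∀ j, cmin j ≤ m j ∧ m j ≤ cmax j) (hm0 : ∀ j, 0 ≤ m j)
    (hu : ∑ j, m j / t_ j < 1)
    (hvmax : 0 < ∑ j, (cmax j - cmin j) ^ 2 / t_ j)
    (ti : ℝ) (hti : ∀ j, t_ j ≤ ti)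
    (hti2 : (∑ j, m j) / (1 - ∑ j, m j / t_ j) < ti)
    {Ω : Type*} [MeasurableSpace Ω] (μ : Measure Ω) [IsProbabilityMeasure μ]
    (C : (Σ j : Fin i, Fin ⌈ti / t_ j⌉₊) → Ω → ℝ) (hCmeas : ∀ p, Measurable (C p))
    (hindep : iIndepFun C μ)
    (hbound : ∀ p : Σ j : Fin i, Fin ⌈ti / t_ j⌉₊,
      ∀ᵐ ω ∂μ, cmin p.1 ≤ C p ω ∧ C p ω ≤ cmax p.1)
    (hmean : ∀ p : Σ j : Fin i, Fin ⌈ti / t_ j⌉₊, ∫ ω, C p ω ∂μ = m p.1) :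
    (μ {ω | ti < ∑ p : Σ j : Fin i, Fin ⌈ti / t_ j⌉₊, C p ω}).toReal ≤
      Real.exp (-(ti * (1 - ∑ j, m j / t_ j) - ∑ j, m j) ^ 2 /
        (ti * ∑ j, (cmax j - cmin j) ^ 2 / t_ j)) := by
  set u := ∑ j, m j / t_ j with hu'
  set v := ∑ j, (cmax j - cmin j) ^ 2 / t_ j with hv'
  set Sm := ∑ j, m j with hSm'
  have h1u : 0 < 1 - u := by linarith
  have hSm0 : 0 ≤ Sm := Finset.sum_nonneg fun j _ => hm0 j
  have hε : 0 < ti * (1 - u) - Sm := by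
    have := (div_lt_iff₀ h1u).mp hti2
    linarith
  have hT : 0 < ti := by nlinarith
  have hTv : 0 < ti * v := mul_pos hT hvmax
  set ε := ti * (1 - u) - Sm with hεdef
  set l := 2 * ε / (ti * v) with hl'
  have hl : 0 < l := div_pos (by linarith) hTv
  -- sums over the sigma type
  have hsig : ∀ f : Fin i → ℝ,
      ∑ p : (Σ j : Fin i, Fin ⌈ti / t_ j⌉₊), f p.1
        = ∑ j, (⌈ti / t_ j⌉₊ : ℝ) * f j := by
    intro f
    rw [← Finset.univ_sigma_univ, Finset.sum_sigma]
    simp [Finset.sum_const, Finset.card_univ, mul_comm]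
  have hceil : ∀ j, (⌈ti / t_ j⌉₊ : ℝ) ≤ ti / t_ j + 1 := by
    intro j
    exact (Nat.ceil_lt_add_one (div_nonneg hT.le (ht_ j).le)).le
  have hdiv1 : ∀ j, (1:ℝ) ≤ ti / t_ j := fun j => (one_le_div (ht_ j)).mpr (hti j)
  have hM : ∑ p : (Σ j : Fin i, Fin ⌈ti / t_ j⌉₊), m p.1 ≤ ti * u + Sm := by
    rw [hsig]
    calc ∑ j, (⌈ti / t_ j⌉₊ : ℝ) * m j ≤ ∑ j, (ti / t_ j + 1) * m j :=
          Finset.sum_le_sum fun j _ => mul_le_mul_of_nonneg_right (hceil j) (hm0 j)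
      _ = ti * u + Sm := by
          rw [hu', hSm', Finset.mul_sum, ← Finset.sum_add_distrib]
          exact Finset.sum_congr rfl fun j _ => by ring
  have hS2 : ∑ p : (Σ j : Fin i, Fin ⌈ti / t_ j⌉₊), (cmax p.1 - cmin p.1) ^ 2
      ≤ 2 * (ti * v) := by
    rw [hsig (fun j => (cmax j - cmin j) ^ 2)]
    calc ∑ j, (⌈ti / t_ j⌉₊ : ℝ) * (cmax j - cmin j) ^ 2
        ≤ ∑ j, 2 * ti * ((cmax j - cmin j) ^ 2 / t_ j) := by
          refine Finset.sum_le_sum fun j _ => ?_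
          have h1 : (⌈ti / t_ j⌉₊ : ℝ) ≤ 2 * (ti / t_ j) := by
            have := hceil j; have := hdiv1 j; linarith
          calc (⌈ti / t_ j⌉₊ : ℝ) * (cmax j - cmin j) ^ 2
              ≤ 2 * (ti / t_ j) * (cmax j - cmin j) ^ 2 :=
                mul_le_mul_of_nonneg_right h1 (sq_nonneg _)
            _ = 2 * ti * ((cmax j - cmin j) ^ 2 / t_ j) := by ring
      _ = 2 * (ti * v) := by
          rw [hv', Finset.mul_sum, Finset.mul_sum]
          exact Finset.sum_congr rfl fun j _ => by ring
  -- the workload as a function sum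
  have hW : (fun ω => ∑ p : (Σ j : Fin i, Fin ⌈ti / t_ j⌉₊), C p ω)
      = ∑ p : (Σ j : Fin i, Fin ⌈ti / t_ j⌉₊), C p := by
    funext ω
    simp [Finset.sum_apply]
  have hint : Integrable
      (fun ω => exp (l * (∑ p : (Σ j : Fin i, Fin ⌈ti / t_ j⌉₊), C p) ω)) μ :=
    hindep.integrable_exp_mul_sum hCmeas fun p _ =>
      int_exp_bdd μ (C p) (hCmeas p) _ _ l (hbound p)
  -- mgf bound
  have hmgf : mgf (∑ p : (Σ j : Fin i, Fin ⌈ti / t_ j⌉₊), C p) μ l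
      ≤ exp (l * (∑ p : (Σ j : Fin i, Fin ⌈ti / t_ j⌉₊), m p.1)
          + l ^ 2 * (∑ p : (Σ j : Fin i, Fin ⌈ti / t_ j⌉₊), (cmax p.1 - cmin p.1) ^ 2) / 8) := by
    rw [hindep.mgf_sum hCmeas]
    calc ∏ p : (Σ j : Fin i, Fin ⌈ti / t_ j⌉₊), mgf (C p) μ l
        ≤ ∏ p : (Σ j : Fin i, Fin ⌈ti / t_ j⌉₊),
            exp (l * m p.1 + l ^ 2 * (cmax p.1 - cmin p.1) ^ 2 / 8) := by
          refine Finset.prod_le_prod (fun p _ => mgf_nonneg) fun p _ => ?_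
          have := hoeff_mgf μ (C p) (hCmeas p) (cmin p.1) (cmax p.1) l (hc p.1) (hbound p)
          rwa [hmean p] at this
      _ = exp (l * (∑ p : (Σ j : Fin i, Fin ⌈ti / t_ j⌉₊), m p.1)
          + l ^ 2 * (∑ p : (Σ j : Fin i, Fin ⌈ti / t_ j⌉₊), (cmax p.1 - cmin p.1) ^ 2) / 8) := by
          rw [← Real.exp_sum]
          congr 1
          rw [Finset.sum_add_distrib, ← Finset.mul_sum]
          congr 1
          rw [← Finset.sum_div, ← Finset.mul_sum]
  -- Chernoff
  have chern := measure_ge_le_exp_mul_mgf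
    (X := ∑ p : (Σ j : Fin i, Fin ⌈ti / t_ j⌉₊), C p) (μ := μ) ti hl.le hint
  have hmono : (μ {ω | ti < ∑ p : (Σ j : Fin i, Fin ⌈ti / t_ j⌉₊), C p ω}).toReal
      ≤ (μ {ω | ti ≤ (∑ p : (Σ j : Fin i, Fin ⌈ti / t_ j⌉₊), C p) ω}).toReal := by
    refine ENNReal.toReal_mono (measure_ne_top μ _) (measure_mono fun ω h => ?_)
    simp only [Set.mem_setOf_eq] at h ⊢
    rw [Finset.sum_apply]
    exact le_of_lt h
  refine le_trans hmono (le_trans chern ?_)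
  -- final arithmetic
  set M := ∑ p : (Σ j : Fin i, Fin ⌈ti / t_ j⌉₊), m p.1 with hM'
  set S2 := ∑ p : (Σ j : Fin i, Fin ⌈ti / t_ j⌉₊), (cmax p.1 - cmin p.1) ^ 2 with hS2'
  calc exp (-l * ti) * mgf (∑ p : (Σ j : Fin i, Fin ⌈ti / t_ j⌉₊), C p) μ l
      ≤ exp (-l * ti) * exp (l * M + l ^ 2 * S2 / 8) :=
        mul_le_mul_of_nonneg_left hmgf (exp_pos _).le
    _ = exp (-l * ti + (l * M + l ^ 2 * S2 / 8)) := (Real.exp_add _ _).symm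
    _ ≤ exp (-ε ^ 2 / (ti * v)) := by
        apply exp_le_exp.mpr
        have t1 : l * M ≤ l * (ti * u + Sm) := mul_le_mul_of_nonneg_left hM hl.le
        have t2 : l ^ 2 * S2 ≤ l ^ 2 * (2 * (ti * v)) :=
          mul_le_mul_of_nonneg_left hS2 (sq_nonneg l)
        have t3 : -l * ti + (l * (ti * u + Sm) + l ^ 2 * (2 * (ti * v)) / 8)
            = -(l * ε) + l ^ 2 * (ti * v) / 4 := by rw [hεdef]; ring
        have t4 : -(l * ε) + l ^ 2 * (ti * v) / 4 = -ε ^ 2 / (ti * v) := by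
          rw [hl']
          field_simp
          ring
        nlinarith [t1, t2, t3, t4]
end
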